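/- Let $p > 1$, $\alpha > 0$, $\zeta = (p-1)^2 p^{-p/(p-1)}$, and define $u(r,t) = t^{-\alpha/p} \exp(-\zeta (r/t^{1/p})^{p/(p-1)})$ for $r > 0$, $t > 0$. Then for all $r, t > 0$: $\partial_t u(r,t) = -r^{1-\alpha} \partial_r\left( r^{\alpha-1} \left( -\partial_r \left( u(r,t)^{1/(p-1)} \right) \right)^{p-1} \right)$. -/

import Mathlib

/-!
The function `u` is self-similar, `u(r, t) = t^(-α/p) f(r / t^(1/p))`, so differentiating in `t`
gives `∂_t u = -(α u + r ∂_r u) / (p t)`. On the other side, the value of `ζ` is exactly what makes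
the flux collapse: `(-∂_r u^(1/(p-1)))^(p-1) = r u / (p t)`. Hence `r^(α-1)` times the flux is
`r^α u / (p t)`, and `-r^(1-α) ∂_r (r^α u) / (p t) = -(α u + r ∂_r u) / (p t)` as well.
-/

open Real

noncomputable def selfSimilar (b c : ℝ) (f : ℝ → ℝ) (r t : ℝ) : ℝ := t ^ b * f (r / t ^ c)

section SelfSimilar

variable {b c r t f' : ℝ} {f : ℝ → ℝ}

theorem hasDerivAt_selfSimilar_radial (hf : HasDerivAt f f' (r / t ^ c)) :
    HasDerivAt (fun r => selfSimilar b c f r t) (t ^ b * f' / t ^ c) r :=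
  ((hf.comp r ((hasDerivAt_id r).div_const (t ^ c))).const_mul (t ^ b)).congr_deriv (by ring)

theorem hasDerivAt_selfSimilar_time (ht : 0 < t) (hf : HasDerivAt f f' (r / t ^ c)) :
    HasDerivAt (fun t => selfSimilar b c f r t)
      ((b * selfSimilar b c f r t - c * r * (t ^ b * f' / t ^ c)) / t) t := by
  have htc : t ^ c ≠ 0 := (rpow_pos_of_pos ht c).ne'
  have hx : HasDerivAt (fun t => r / t ^ c) (-(c * r / t ^ c) / t) t := by
    refine (((hasDerivAt_rpow_const (Or.inl ht.ne')).inv htc).const_mul r).congr_deriv ?_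
    rw [rpow_sub_one ht.ne']
    field_simp
  refine ((hasDerivAt_rpow_const (p := b) (Or.inl ht.ne')).mul (hf.comp t hx)).congr_deriv ?_
  rw [selfSimilar, rpow_sub_one ht.ne', Function.comp_apply]
  field_simp
  ring

end SelfSimilar

theorem hasDerivAt_exp_neg_mul_rpow (ζ q : ℝ) {s : ℝ} (hs : s ≠ 0) :
    HasDerivAt (fun s => exp (-ζ * s ^ q)) (-(ζ * q * s ^ (q - 1)) * exp (-ζ * s ^ q)) s :=
  (((hasDerivAt_rpow_const (Or.inl hs)).const_mul (-ζ)).exp).congr_deriv (by ring)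

theorem selfSimilar_exp_pos (b c ζ q r : ℝ) {t : ℝ} (ht : 0 < t) :
    0 < selfSimilar b c (fun s => exp (-ζ * s ^ q)) r t :=
  mul_pos (rpow_pos_of_pos ht b) (exp_pos _)

theorem hasDerivAt_selfSimilar_exp_radial (b c ζ q : ℝ) {r t : ℝ} (hr : r ≠ 0) (ht : 0 < t) :
    HasDerivAt (fun r => selfSimilar b c (fun s => exp (-ζ * s ^ q)) r t)
      (-(ζ * q * (r / t ^ c) ^ (q - 1) / t ^ c) *
        selfSimilar b c (fun s => exp (-ζ * s ^ q)) r t) r :=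
  (hasDerivAt_selfSimilar_radial (hasDerivAt_exp_neg_mul_rpow ζ q
    (div_ne_zero hr (rpow_pos_of_pos ht c).ne'))).congr_deriv (by rw [selfSimilar]; ring)

theorem hasDerivAt_selfSimilar_exp_rpow_radial (b c ζ q m : ℝ) {r t : ℝ} (hr : r ≠ 0)
    (ht : 0 < t) :
    HasDerivAt (fun r => selfSimilar b c (fun s => exp (-ζ * s ^ q)) r t ^ m)
      (-(m * ζ * q * (r / t ^ c) ^ (q - 1) / t ^ c) *
        selfSimilar b c (fun s => exp (-ζ * s ^ q)) r t ^ m) r := by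
  have hu := selfSimilar_exp_pos b c ζ q r ht
  refine ((hasDerivAt_selfSimilar_exp_radial b c ζ q hr ht).rpow_const
    (Or.inl hu.ne')).congr_deriv ?_
  generalize selfSimilar b c (fun s => exp (-ζ * s ^ q)) r t = u at hu ⊢
  rw [rpow_sub_one hu.ne']
  field_simp

noncomputable def barenblatt (p α ζ : ℝ) : ℝ → ℝ → ℝ :=
  selfSimilar (-α / p) (1 / p) (fun s => exp (-ζ * s ^ (p / (p - 1))))

section Barenblatt

variable {p α ζ : ℝ}

/-- Raised to the power `p - 1`, the right-hand side becomes `p⁻¹`: this is the `1 / p` in the flux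
`r u / (p t)`. -/
theorem barenblatt_const (hp : 1 < p) (hζ : ζ = (p - 1) ^ (2 : ℕ) * p ^ (-p / (p - 1))) :
    1 / (p - 1) * ζ * (p / (p - 1)) = p ^ (1 - p / (p - 1)) := by
  have : p - 1 ≠ 0 := by linarith
  rw [hζ, show 1 - p / (p - 1) = -p / (p - 1) + 1 by ring, rpow_add (by linarith), rpow_one]
  field_simp

theorem barenblatt_flux (hp : 1 < p) (hζ : ζ = (p - 1) ^ (2 : ℕ) * p ^ (-p / (p - 1)))
    {r t : ℝ} (hr : 0 < r) (ht : 0 < t) :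
    (-deriv (fun r => barenblatt p α ζ r t ^ (1 / (p - 1))) r) ^ (p - 1) =
      r * barenblatt p α ζ r t / (p * t) := by
  have hp0 : 0 < p := by linarith
  have hu := selfSimilar_exp_pos (-α / p) (1 / p) ζ (p / (p - 1)) r ht
  have hx : 0 < r / t ^ (1 / p) := div_pos hr (rpow_pos_of_pos ht _)
  unfold barenblatt
  rw [(hasDerivAt_selfSimilar_exp_rpow_radial _ _ ζ _ (1 / (p - 1)) hr.ne' ht).deriv, neg_mul,
    neg_neg, barenblatt_const hp hζ]
  generalize selfSimilar (-α / p) (1 / p) (fun s => exp (-ζ * s ^ (p / (p - 1)))) r t = u at hu ⊢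
  have hp1 : p - 1 ≠ 0 := by linarith
  have hq : (p / (p - 1) - 1) * (p - 1) = 1 := by field_simp; ring
  rw [mul_rpow (by positivity) (by positivity), div_rpow (by positivity) (by positivity),
    mul_rpow (by positivity) (by positivity), ← rpow_mul hp0.le, ← rpow_mul hx.le, ← rpow_mul ht.le,
    ← rpow_mul hu.le, hq, show (1 - p / (p - 1)) * (p - 1) = -1 by linear_combination -hq,
    one_div_mul_cancel hp1, rpow_one, rpow_one, rpow_neg_one, mul_div_assoc, div_div,
    ← rpow_add ht, show 1 / p + 1 / p * (p - 1) = 1 by field_simp; ring, rpow_one]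
  field_simp

theorem hasDerivAt_barenblatt_time (hp : p ≠ 0) {r t D : ℝ} (hr : r ≠ 0) (ht : 0 < t)
    (hD : HasDerivAt (fun r => barenblatt p α ζ r t) D r) :
    HasDerivAt (fun t => barenblatt p α ζ r t)
      (-(α * barenblatt p α ζ r t + r * D) / (p * t)) t := by
  unfold barenblatt at hD ⊢
  have hf := hasDerivAt_exp_neg_mul_rpow ζ (p / (p - 1))
    (div_ne_zero hr (rpow_pos_of_pos ht (1 / p)).ne')
  rw [hD.unique (hasDerivAt_selfSimilar_radial hf)]
  refine (hasDerivAt_selfSimilar_time ht hf).congr_deriv ?_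
  field_simp
  ring

end Barenblatt

theorem stmt_3_general (p α ζ : ℝ) (hp : 1 < p)
    (hζ : ζ = (p - 1) ^ (2 : ℕ) * p ^ (-p / (p - 1)))
    (u : ℝ → ℝ → ℝ)
    (hu : ∀ r t : ℝ, u r t = t ^ (-α / p) * Real.exp (-ζ * (r / t ^ (1 / p)) ^ (p / (p - 1)))) :
    ∀ r t : ℝ, 0 < r → 0 < t →
      deriv (fun t' => u r t') t
        = -r ^ (1 - α) *
          deriv (fun r' => r' ^ (α - 1) *
            (-(deriv (fun r'' => (u r'' t) ^ (1 / (p - 1))) r')) ^ (p - 1)) r := by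
  intro r t hr ht
  obtain rfl : u = barenblatt p α ζ := funext₂ hu
  obtain ⟨D, hD⟩ : ∃ D, HasDerivAt (fun r => barenblatt p α ζ r t) D r :=
    ⟨_, hasDerivAt_selfSimilar_exp_radial _ _ ζ _ hr.ne' ht⟩
  have hflux : (fun r' => r' ^ (α - 1) *
      (-deriv (fun r'' => barenblatt p α ζ r'' t ^ (1 / (p - 1))) r') ^ (p - 1)) =ᶠ[nhds r]
      fun r' => r' ^ α * barenblatt p α ζ r' t / (p * t) := by
    filter_upwards [eventually_gt_nhds hr] with r' hr'
    rw [barenblatt_flux hp hζ hr' ht, rpow_sub_one hr'.ne']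
    field_simp
  have hdiv : HasDerivAt (fun r' => r' ^ α * barenblatt p α ζ r' t / (p * t))
      ((α * r ^ (α - 1) * barenblatt p α ζ r t + r ^ α * D) / (p * t)) r :=
    ((hasDerivAt_rpow_const (Or.inl hr.ne')).mul hD).div_const _
  rw [(hasDerivAt_barenblatt_time (by linarith) hr.ne' ht hD).deriv, hflux.deriv_eq, hdiv.deriv]
  have e1 : r ^ (1 - α) * r ^ (α - 1) = 1 := by
    rw [← rpow_add hr, show 1 - α + (α - 1) = 0 by ring, rpow_zero]
  have e2 : r ^ (1 - α) * r ^ α = r := by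
    rw [← rpow_add hr, show 1 - α + α = 1 by ring, rpow_one]
  linear_combination (α * barenblatt p α ζ r t / (p * t)) * e1 + (D / (p * t)) * e2

theorem stmt_3 (p α ζ : ℝ) (hp : 1 < p) (hα : 0 < α)
    (hζ : ζ = (p - 1) ^ (2 : ℕ) * p ^ (-p / (p - 1)))
    (u : ℝ → ℝ → ℝ)
    (hu : ∀ r t : ℝ, u r t = t ^ (-α / p) * Real.exp (-ζ * (r / t ^ (1 / p)) ^ (p / (p - 1)))) :
    ∀ r t : ℝ, 0 < r → 0 < t →
      deriv (fun t' => u r t') t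
        = -r ^ (1 - α) *
          deriv (fun r' => r' ^ (α - 1) *
            (-(deriv (fun r'' => (u r'' t) ^ (1 / (p - 1))) r')) ^ (p - 1)) r :=
  stmt_3_general p α ζ hp hζ u hu
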